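/- Let Γ ⊂ ℂ^× be a torsion-free multiplicative subgroup which is free of rank t ≥ 1. The set R_Γ of all sequences ℕ → ℂ that are linear recurrence sequences (or identically zero) whose roots all belong to Γ forms a subring of the ring of all functions ℕ → ℂ under pointwise addition and multiplication, and R_Γ is isomorphic as a ring to the Laurent polynomial ring ℂ[X, T₁, …, T_t, T₁^{−1}, …, T_t^{−1}]; in particular R_Γ is a unique factorisation domain. -/

import Mathlib

open Polynomial

/-- A linear recurrence (polynomial–exponential) sequence over `ℂ` all of whose roots lie in
the subgroup `Γ ⊆ ℂˣ` (the identically zero sequence corresponds to `r = 0`). -/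
def IsLinRecWithRootsIn (Γ : Subgroup ℂˣ) (f : ℕ → ℂ) : Prop :=
  ∃ (r : ℕ) (u : Fin r → Polynomial ℂ) (α : Fin r → ℂˣ),
    (∀ i, u i ≠ 0) ∧ Function.Injective α ∧ (∀ i, α i ∈ Γ) ∧
    ∀ n, f n = ∑ i, (u i).eval (n : ℂ) * (α i : ℂ) ^ n

/-!
Send `Σ_γ u_γ ⬝ γ` in the group algebra `K[X][Γ]` to the sequence `n ↦ Σ_γ u_γ(n) γⁿ`. This is a
ring homomorphism whose image is exactly the set of linear recurrences with roots in `Γ`. It is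
injective because `n ↦ u(n) γⁿ` is a generalised eigenvector of the shift operator with eigenvalue
`γ` (the forward difference kills `n ↦ u(n)` after `deg u + 1` steps), and generalised eigenspaces
for distinct eigenvalues are independent. Finally `ℂ[X][ℤᵗ] ≃ ℂ[ℤᵗ][X]`, and `ℂ[ℤᵗ]` is an
iterated Laurent polynomial ring, hence a UFD, each step being a localisation of a polynomial ring.
-/

open LaurentPolynomial fwdDiff

instance LaurentPolynomial.instUniqueFactorizationMonoid (R : Type*) [CommRing R] [IsDomain R]
    [UniqueFactorizationMonoid R] : UniqueFactorizationMonoid R[T;T⁻¹] :=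
  .of_isLocalization (Submonoid.powers (X : R[X])) _

noncomputable def Finsupp.optionAddEquiv {α M : Type*} [AddZeroClass M] :
    (Option α →₀ M) ≃+ M × (α →₀ M) :=
  { Finsupp.optionEquiv with map_add' := fun f g => by simp }

namespace AddMonoidAlgebra

noncomputable def finsuppOptionRingEquiv (R σ : Type*) [CommSemiring R] :
    AddMonoidAlgebra R (Option σ →₀ ℤ) ≃+* (AddMonoidAlgebra R (σ →₀ ℤ))[T;T⁻¹] :=
  (mapDomainRingEquiv R Finsupp.optionAddEquiv).trans curryRingEquiv

instance instUniqueFactorizationMonoidFinsuppInt (R : Type*) [CommRing R] [IsDomain R]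
    [UniqueFactorizationMonoid R] (σ : Type*) [Finite σ] :
    UniqueFactorizationMonoid (AddMonoidAlgebra R (σ →₀ ℤ)) := by
  induction σ using Finite.induction_empty_option with
  | of_equiv e h =>
    exact (mapDomainRingEquiv R (Finsupp.domCongr e)).toMulEquiv.uniqueFactorizationMonoid h
  | h_empty => exact (uniqueRingEquiv _).symm.toMulEquiv.uniqueFactorizationMonoid inferInstance
  | h_option h =>
    exact (finsuppOptionRingEquiv R _).symm.toMulEquiv.uniqueFactorizationMonoid inferInstance

noncomputable def polynomialRingEquiv (R A : Type*) [CommSemiring R] [AddCommMonoid A] :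
    AddMonoidAlgebra R[X] A ≃+* (AddMonoidAlgebra R A)[X] :=
  (mapRingEquiv A (toFinsuppIso R)).trans (commRingEquiv.trans (toFinsuppIso _).symm)

end AddMonoidAlgebra

theorem Polynomial.eq_zero_of_forall_eval_natCast_eq_zero {R : Type*} [CommRing R] [IsDomain R]
    [CharZero R] {p : R[X]} (h : ∀ n : ℕ, p.eval (n : R) = 0) : p = 0 :=
  p.eq_zero_of_infinite_isRoot <| (Set.infinite_range_of_injective Nat.cast_injective).mono <| by
    rintro _ ⟨n, rfl⟩
    exact h n

theorem fwdDiff_iter_comp_natCast {R G : Type*} [AddCommMonoidWithOne R] [AddCommGroup G]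
    (f : R → G) (k : ℕ) : (Δ_[1])^[k] (f ∘ Nat.cast) = ((Δ_[1])^[k] f) ∘ Nat.cast := by
  have : Function.Semiconj (· ∘ (Nat.cast : ℕ → R)) (fwdDiff (1 : R) (G := G)) (fwdDiff 1) :=
    fun f => by funext n; simp [fwdDiff]
  exact (this.iterate_right k f).symm

section Shift

variable {K : Type*} [Field K]

variable (K) in
noncomputable def seqShift : Module.End K (ℕ → K) := LinearMap.funLeft K K Nat.succ

theorem seqShift_sub_smul_apply (α : K) (g : ℕ → K) :
    (seqShift K - α • 1) (fun n => g n * α ^ n) = α • fun n => Δ_[1] g n * α ^ n := by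
  funext n
  simp only [seqShift, LinearMap.sub_apply, LinearMap.smul_apply, Module.End.one_apply,
    Pi.sub_apply, LinearMap.funLeft_apply, Nat.succ_eq_add_one, pow_succ, Pi.smul_apply,
    smul_eq_mul, fwdDiff]
  ring

theorem seqShift_sub_smul_pow_apply (α : K) (g : ℕ → K) (k : ℕ) :
    ((seqShift K - α • 1) ^ k) (fun n => g n * α ^ n) =
      α ^ k • fun n => (Δ_[1])^[k] g n * α ^ n := by
  induction k with
  | zero => simp
  | succ k ih =>
    rw [pow_succ', Module.End.mul_apply, ih, map_smul, seqShift_sub_smul_apply,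
      smul_smul, pow_succ, Function.iterate_succ_apply']

theorem eval_mul_pow_mem_maxGenEigenspace_seqShift (u : K[X]) (α : K) :
    (fun n : ℕ => u.eval (n : K) * α ^ n) ∈ (seqShift K).maxGenEigenspace α := by
  refine (Module.End.mem_maxGenEigenspace _ _ _).2 ⟨u.natDegree + 1, ?_⟩
  have h := seqShift_sub_smul_pow_apply α (u.eval ∘ Nat.cast) (u.natDegree + 1)
  rw [fwdDiff_iter_comp_natCast, u.fwdDiff_iter_degree_add_one_eq_zero] at h
  simpa [← Pi.zero_def] using h

theorem eq_zero_of_sum_eval_mul_pow_eq_zero [CharZero K] {ι : Type*} {α : ι → Kˣ}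
    (hα : Function.Injective α) (s : Finset ι) (u : ι → K[X])
    (h : ∀ n : ℕ, ∑ i ∈ s, (u i).eval (n : K) * (α i : K) ^ n = 0) : ∀ i ∈ s, u i = 0 := by
  have hindep := (seqShift K).independent_maxGenEigenspace.comp (Units.val_injective.comp hα)
  rw [iSupIndep_iff_finsetSum_eq_zero_imp_eq_zero] at hindep
  intro i hi
  have hseq := hindep s (fun i n => (u i).eval (n : K) * (α i : K) ^ n)
    (fun i _ => eval_mul_pow_mem_maxGenEigenspace_seqShift _ _)
    (funext fun n => by simpa [Finset.sum_apply] using h n) i hi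
  refine eq_zero_of_forall_eval_natCast_eq_zero fun n => ?_
  simpa using congr_fun hseq n

end Shift

section PolyExpSeq

variable {K : Type*} [Field K] (Γ : Subgroup Kˣ)

noncomputable def polyExpSeq : MonoidAlgebra K[X] Γ →+* (ℕ → K) :=
  MonoidAlgebra.liftNCRingHom (RingHom.pi fun n : ℕ => evalRingHom (n : K))
    (MonoidHom.pi fun n => (powMonoidHom n).comp ((Units.coeHom K).comp Γ.subtype))
    (fun _ _ => Commute.all _ _)

theorem polyExpSeq_single (γ : Γ) (u : K[X]) :
    polyExpSeq Γ (MonoidAlgebra.single γ u) = fun n : ℕ => u.eval (n : K) * ((γ : Kˣ) : K) ^ n := by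
  ext n
  simp [polyExpSeq]

theorem polyExpSeq_apply (x : MonoidAlgebra K[X] Γ) (n : ℕ) :
    polyExpSeq Γ x n = ∑ γ ∈ x.coeff.support, (x.coeff γ).eval (n : K) * ((γ : Kˣ) : K) ^ n := by
  conv_lhs => rw [← x.sum_coeff_single]
  simp only [Finsupp.sum, map_sum, Finset.sum_apply, polyExpSeq_single]

theorem polyExpSeq_injective [CharZero K] : Function.Injective (polyExpSeq Γ) := by
  rw [injective_iff_map_eq_zero]
  intro x hx
  have hcoeff := eq_zero_of_sum_eval_mul_pow_eq_zero (α := fun γ : Γ => (γ : Kˣ))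
    Subtype.val_injective x.coeff.support x.coeff
    (fun n => by rw [← polyExpSeq_apply, hx, Pi.zero_apply])
  rw [← MonoidAlgebra.coeff_eq_zero, ← Finsupp.support_eq_empty]
  exact Finset.eq_empty_of_forall_notMem fun γ hγ => Finsupp.mem_support_iff.1 hγ (hcoeff γ hγ)

end PolyExpSeq

theorem isLinRecWithRootsIn_polyExpSeq (Γ : Subgroup ℂˣ) (x : MonoidAlgebra ℂ[X] Γ) :
    IsLinRecWithRootsIn Γ (polyExpSeq Γ x) := by
  let e := x.coeff.support.equivFin
  refine ⟨x.coeff.support.card, fun i => x.coeff (e.symm i), fun i => (e.symm i : Γ),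
    fun i => Finsupp.mem_support_iff.1 (e.symm i).2,
    fun i j hij => e.symm.injective (Subtype.ext (Subtype.ext hij)),
    fun i => (e.symm i : Γ).2, fun n => ?_⟩
  rw [polyExpSeq_apply, ← Finset.sum_coe_sort x.coeff.support, ← e.symm.sum_comp]

theorem mem_range_polyExpSeq_iff (Γ : Subgroup ℂˣ) (f : ℕ → ℂ) :
    f ∈ (polyExpSeq Γ).range ↔ f = 0 ∨ IsLinRecWithRootsIn Γ f := by
  refine ⟨fun ⟨x, hx⟩ => .inr (hx ▸ isLinRecWithRootsIn_polyExpSeq Γ x), ?_⟩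
  rintro (rfl | ⟨r, u, α, -, -, hαΓ, hf⟩)
  · exact zero_mem _
  · refine ⟨∑ i, MonoidAlgebra.single ⟨α i, hαΓ i⟩ (u i), funext fun n => ?_⟩
    simp [polyExpSeq_single, hf]

theorem ring_of_recurrences_isomorphic_laurent_general
    (Γ : Subgroup ℂˣ)
    (t : ℕ) (e : Γ ≃* Multiplicative (Fin t →₀ ℤ)) :
    ∃ S : Subring (ℕ → ℂ),
      (∀ f : ℕ → ℂ, f ∈ S ↔ (f = 0 ∨ IsLinRecWithRootsIn Γ f)) ∧
      Nonempty (S ≃+* Polynomial (AddMonoidAlgebra ℂ (Fin t →₀ ℤ))) ∧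
      ∃ hD : IsDomain S,
        UniqueFactorizationMonoid S := by
  let E : (polyExpSeq Γ).range ≃+* (AddMonoidAlgebra ℂ (Fin t →₀ ℤ))[X] :=
    (RingEquiv.ofLeftInverse (Function.leftInverse_invFun (polyExpSeq_injective Γ))).symm.trans <|
      (MonoidAlgebra.mapDomainRingEquiv ℂ[X] e).trans <|
        (AddMonoidAlgebra.toMultiplicative ℂ[X] _).symm.trans <|
          AddMonoidAlgebra.polynomialRingEquiv ℂ _
  refine ⟨(polyExpSeq Γ).range, mem_range_polyExpSeq_iff Γ, ⟨E⟩,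
    MulEquiv.isDomain _ E.toMulEquiv, ?_⟩
  exact E.symm.toMulEquiv.uniqueFactorizationMonoid inferInstance

/-- **The ring `R_Γ` of linear recurrences with roots in `Γ`.** Let `Γ ⊂ ℂˣ` be a
torsion-free multiplicative subgroup, free of rank `t ≥ 1`. The set of sequences `ℕ → ℂ`
that are linear recurrences with all roots in `Γ` (or identically zero) is a subring of the
ring of all functions `ℕ → ℂ` under pointwise operations, and this ring is isomorphic to
the Laurent polynomial ring `ℂ[X, T₁^{±1}, …, T_t^{±1}]` (realized as polynomials over the
group algebra `ℂ[Fin t →₀ ℤ]`); in particular it is an integral domain and a unique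
factorisation domain. -/
theorem ring_of_recurrences_isomorphic_laurent
    (Γ : Subgroup ℂˣ) (htf : ∀ g : Γ, g ≠ 1 → ¬IsOfFinOrder g)
    (t : ℕ) (ht : 1 ≤ t) (e : Γ ≃* Multiplicative (Fin t →₀ ℤ)) :
    ∃ S : Subring (ℕ → ℂ),
      (∀ f : ℕ → ℂ, f ∈ S ↔ (f = 0 ∨ IsLinRecWithRootsIn Γ f)) ∧
      Nonempty (S ≃+* Polynomial (AddMonoidAlgebra ℂ (Fin t →₀ ℤ))) ∧
      ∃ hD : IsDomain S,
        UniqueFactorizationMonoid S :=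
  ring_of_recurrences_isomorphic_laurent_general Γ t e
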